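/- Finite mixtures of univariate logistic distributions are identifiable: if sum_{i=1}^s π_i L(x; μ_i, σ_i) = sum_{j=1}^t π'_j L(x; μ'_j, σ'_j) for all x ∈ ℝ, where the (μ_i, σ_i) are pairwise distinct, the (μ'_j, σ'_j) are pairwise distinct, all weights are in (0,1) and each set of weights sums to 1, then s = t and the collections of triples {(π_i, μ_i, σ_i)} and {(π'_j, μ'_j, σ'_j)} coincide as sets. -/

import Mathlib

/-!
Identifiability reduces to linear independence of the cdfs `x ↦ sigmoid ((x - μ) / σ)`, `σ > 0`.
Over `ℂ`, the cdf with parameters `(μ, σ)` is meromorphic with poles at `μ - (2n + 1)πσi`, so a real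
combination vanishing on `ℝ` vanishes on the strip `|Im z| < πσ_min` by the identity theorem. For a
component `q` of minimal scale, the boundary point `μ_q - πσ_q i` is a pole of its own cdf but a
regular point of every other one; letting `z` tend to it forces the coefficient of `q` to vanish.
-/

open Complex Set Filter Topology

namespace Finsupp

theorem coe_support_mapDomain_equivFunOnFinite_symm {α β M : Type*} [AddCommMonoid M] [Fintype α]
    {f : α → β} (hf : f.Injective) {a : α → M} (ha : ∀ i, a i ≠ 0) :
    ((mapDomain f (equivFunOnFinite.symm a)).support : Set β) = range f := by
  classical
  ext b
  simp [mapDomain_support_of_injective hf, ha]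

end Finsupp

theorem LinearIndependent.exists_equiv_of_sum_smul_eq {ι R M α β : Type*} [Semiring R]
    [AddCommMonoid M] [Module R M] [Fintype α] [Fintype β] {v : ι → M}
    (hv : LinearIndependent R v) {P : α → ι} {Q : β → ι} (hP : P.Injective) (hQ : Q.Injective)
    {a : α → R} {b : β → R} (ha : ∀ i, a i ≠ 0) (hb : ∀ j, b j ≠ 0)
    (h : ∑ i, a i • v (P i) = ∑ j, b j • v (Q j)) :
    ∃ e : α ≃ β, ∀ i, Q (e i) = P i ∧ b (e i) = a i := by
  set f := Finsupp.mapDomain P ((Finsupp.linearEquivFunOnFinite R R α).symm a)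
  set g := Finsupp.mapDomain Q ((Finsupp.linearEquivFunOnFinite R R β).symm b)
  have hfg : f = g := hv <| by
    simp only [f, g, Finsupp.linearCombination_mapDomain,
      Finsupp.linearCombination_eq_fintype_linearCombination_apply,
      Fintype.linearCombination_apply, Function.comp_apply, h]
  have hrange : range P = range Q := by
    rw [← Finsupp.coe_support_mapDomain_equivFunOnFinite_symm hP ha,
      ← Finsupp.coe_support_mapDomain_equivFunOnFinite_symm hQ hb]
    exact congrArg (fun l : ι →₀ R => (l.support : Set ι)) hfg
  let e : α ≃ β := (Equiv.ofInjective P hP).trans <|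
    (Equiv.setCongr hrange).trans (Equiv.ofInjective Q hQ).symm
  have hQe : ∀ i, Q (e i) = P i := fun i => Equiv.apply_ofInjective_symm hQ _
  refine ⟨e, fun i => ⟨hQe i, ?_⟩⟩
  calc b (e i) = g (Q (e i)) := by simp [g, hQ]
    _ = f (P i) := by rw [hQe, hfg]
    _ = a i := by simp [f, hP]

theorem AnalyticOnNhd.eqOn_zero_of_forall_ofReal {f : ℂ → ℂ} {U : Set ℂ}
    (hf : AnalyticOnNhd ℂ f U) (hU : IsPreconnected U) {x₀ : ℝ} (hx₀ : (x₀ : ℂ) ∈ U)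
    (h : ∀ x : ℝ, f x = 0) : EqOn f 0 U := by
  refine hf.eqOn_zero_of_preconnected_of_frequently_eq_zero hU hx₀ ?_
  have hlim : Tendsto ((↑) : ℝ → ℂ) (𝓝[≠] x₀) (𝓝[≠] (x₀ : ℂ)) :=
    continuous_ofReal.continuousWithinAt.tendsto_nhdsWithin fun x hx => by simpa using hx
  exact hlim.frequently (Frequently.of_forall h)

section Logistic

open Real

noncomputable def logisticDenom (μ σ : ℝ) (z : ℂ) : ℂ := 1 + cexp (-(z - μ) / σ)

theorem ofReal_sigmoid_div (μ σ x : ℝ) :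
    (sigmoid ((x - μ) / σ) : ℂ) = (logisticDenom μ σ x)⁻¹ := by
  simp [Real.sigmoid, logisticDenom, ← neg_div]

theorem differentiable_logisticDenom (μ σ : ℝ) : Differentiable ℂ (logisticDenom μ σ) := by
  unfold logisticDenom; fun_prop

theorem logisticDenom_eq_zero_iff {μ σ : ℝ} (hσ : σ ≠ 0) {z : ℂ} :
    logisticDenom μ σ z = 0 ↔ ∃ n : ℤ, z = μ - (2 * n + 1) * π * σ * I := by
  have hσ' : (σ : ℂ) ≠ 0 := ofReal_ne_zero.2 hσ
  rw [logisticDenom, add_eq_zero_iff_eq_neg', ← exp_pi_mul_I, exp_eq_exp_iff_exists_int]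
  refine exists_congr fun n => ⟨fun h => ?_, fun h => ?_⟩
  · rw [div_eq_iff hσ'] at h
    linear_combination -h
  · rw [h]; field_simp; ring

theorem logisticDenom_ne_zero_of_abs_im_lt {μ σ : ℝ} (hσ : 0 < σ) {z : ℂ}
    (hz : |z.im| < π * σ) : logisticDenom μ σ z ≠ 0 := by
  rw [Ne, logisticDenom_eq_zero_iff hσ.ne']
  rintro ⟨n, rfl⟩
  have h1 : (1 : ℝ) ≤ |((2 * n + 1 : ℤ) : ℝ)| := by
    rw [← Int.cast_abs]; exact_mod_cast Int.one_le_abs (by omega)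
  have him : |(μ - (2 * n + 1) * π * σ * I : ℂ).im| = |((2 * n + 1 : ℤ) : ℝ)| * π * σ := by
    simp [abs_mul, abs_of_pos hσ, abs_of_pos pi_pos]
  nlinarith [mul_pos pi_pos hσ]

theorem logisticDenom_self_pole {μ σ : ℝ} (hσ : σ ≠ 0) :
    logisticDenom μ σ (μ - π * σ * I) = 0 :=
  (logisticDenom_eq_zero_iff hσ).2 ⟨0, by simp⟩

theorem logisticDenom_pole_ne_zero {μ σ ν τ : ℝ} (hτ : 0 < τ) (hle : τ ≤ σ)
    (hne : (ν, τ) ≠ (μ, σ)) : logisticDenom μ σ (ν - π * τ * I) ≠ 0 := by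
  rw [Ne, logisticDenom_eq_zero_iff (hτ.trans_le hle).ne']
  rintro ⟨n, hn⟩
  have hre : ν = μ := by simpa using congrArg re hn
  have him : τ = (2 * n + 1) * σ := by
    have : π * τ = (2 * n + 1) * π * σ := by simpa using congrArg im hn
    exact mul_left_cancel₀ pi_ne_zero (by linear_combination this)
  have hn0 : n = 0 := by
    have h1 : (0 : ℤ) < 2 * n + 1 := by exact_mod_cast (by nlinarith : (0 : ℝ) < 2 * n + 1)
    have h2 : 2 * n + 1 ≤ (1 : ℤ) := by exact_mod_cast (by nlinarith : (2 * n + 1 : ℝ) ≤ 1)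
    omega
  exact hne (by simp [hre, him, hn0])

theorem eqOn_zero_of_sum_sigmoid_eq_zero {A : Finset (ℝ × ℝ)} {c : ℝ × ℝ → ℝ} {σ₀ : ℝ}
    (hσ₀ : 0 < σ₀) (hA : ∀ p ∈ A, σ₀ ≤ p.2)
    (h : ∀ x : ℝ, ∑ p ∈ A, c p * sigmoid ((x - p.1) / p.2) = 0) :
    EqOn (fun z => ∑ p ∈ A, (c p : ℂ) * (logisticDenom p.1 p.2 z)⁻¹) 0
      (im ⁻¹' Ioo (-(π * σ₀)) (π * σ₀)) := by
  refine AnalyticOnNhd.eqOn_zero_of_forall_ofReal (x₀ := 0) ?_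
    ((convex_Ioo _ _).linear_preimage imLm).isPreconnected ?_ fun x => ?_
  · refine DifferentiableOn.analyticOnNhd (fun z hz => ?_) (isOpen_Ioo.preimage continuous_im)
    refine (DifferentiableAt.fun_sum fun p hp => ?_).differentiableWithinAt
    have hden : logisticDenom p.1 p.2 z ≠ 0 :=
      logisticDenom_ne_zero_of_abs_im_lt (hσ₀.trans_le (hA p hp)) <| abs_lt.2
        ⟨by nlinarith [hz.1, hA p hp, pi_pos], by nlinarith [hz.2, hA p hp, pi_pos]⟩
    exact ((differentiable_logisticDenom p.1 p.2 z).inv hden).const_mul _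
  · simp [mul_pos pi_pos hσ₀]
  · simpa [← ofReal_sigmoid_div] using congrArg ((↑) : ℝ → ℂ) (h x)

theorem logistic_coeff_eq_zero_of_min_scale {A : Finset (ℝ × ℝ)} {c : ℝ × ℝ → ℝ}
    (hA : ∀ p ∈ A, 0 < p.2) {q : ℝ × ℝ} (hqA : q ∈ A) (hq : ∀ p ∈ A, q.2 ≤ p.2)
    (h : ∀ x : ℝ, ∑ p ∈ A, c p * sigmoid ((x - p.1) / p.2) = 0) : c q = 0 := by
  have hq₀ : 0 < π * q.2 := mul_pos pi_pos (hA q hqA)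
  set S : Set ℂ := im ⁻¹' Ioo (-(π * q.2)) (π * q.2)
  have hF := eqOn_zero_of_sum_sigmoid_eq_zero (hA q hqA) hq h
  set z₀ : ℂ := q.1 - π * q.2 * I
  set G : ℂ → ℂ := fun z => ∑ p ∈ A.erase q, (c p : ℂ) * (logisticDenom p.1 p.2 z)⁻¹
  have hG : ContinuousAt G z₀ := by
    refine tendsto_finsetSum _ fun p hp => ?_
    exact continuousAt_const.mul <| ContinuousAt.inv₀
      (differentiable_logisticDenom p.1 p.2).continuous.continuousAt
      (logisticDenom_pole_ne_zero (hA q hqA) (hq p (Finset.mem_of_mem_erase hp))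
        (Finset.ne_of_mem_erase hp).symm)
  -- on `S` the sum is `c q / logisticDenom q.1 q.2 + G`; clearing that denominator removes the
  -- pole at `z₀`
  set H : ℂ → ℂ := fun z => c q + G z * logisticDenom q.1 q.2 z
  have hH : MapsTo H S {0} := fun z hz => by
    have hFz := hF hz
    simp only [← Finset.add_sum_erase A _ hqA, Pi.zero_apply] at hFz
    have hden : logisticDenom q.1 q.2 z ≠ 0 :=
      logisticDenom_ne_zero_of_abs_im_lt (hA q hqA) (abs_lt.2 hz)
    simp only [H, G, mem_singleton_iff]
    linear_combination logisticDenom q.1 q.2 z * hFz - c q * inv_mul_cancel₀ hden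
  have hz₀ : z₀ ∈ closure S := by
    rw [closure_preimage_im, closure_Ioo (by linarith)]
    simp [z₀, hq₀.le]
  have hHc : ContinuousAt H z₀ :=
    continuousAt_const.add (hG.mul (differentiable_logisticDenom q.1 q.2).continuous.continuousAt)
  have hHz₀ : H z₀ = 0 := by simpa using hHc.continuousWithinAt.mem_closure hz₀ hH
  simpa [H, z₀, logisticDenom_self_pole (hA q hqA).ne'] using hHz₀

theorem linearIndepOn_logistic :
    LinearIndepOn ℝ (fun p : ℝ × ℝ => fun x => sigmoid ((x - p.1) / p.2)) {p | 0 < p.2} := by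
  by_contra hdep
  obtain ⟨l, hl, hsum, hne⟩ := linearDepOn_iff.1 hdep
  obtain ⟨q, hq, hmin⟩ := l.support.exists_min_image Prod.snd (Finsupp.support_nonempty_iff.2 hne)
  refine Finsupp.mem_support_iff.1 hq <| logistic_coeff_eq_zero_of_min_scale
    (fun p hp => hl hp) hq hmin fun x => ?_
  simpa using congrFun hsum x

end Logistic

theorem univariate_logistic_mixture_identifiable_general
    (s t : ℕ)
    (π μ σ : Fin s → ℝ) (π' μ' σ' : Fin t → ℝ)
    (hσ : ∀ i, 0 < σ i) (hσ' : ∀ j, 0 < σ' j)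
    (hπ : ∀ i, π i ∈ Set.Ioo (0 : ℝ) 1) (hπ' : ∀ j, π' j ∈ Set.Ioo (0 : ℝ) 1)
    (hdist : Function.Injective (fun i => (μ i, σ i)))
    (hdist' : Function.Injective (fun j => (μ' j, σ' j)))
    (h : ∀ x : ℝ,
      ∑ i, π i * (1 + Real.exp (-(x - μ i) / σ i))⁻¹ =
      ∑ j, π' j * (1 + Real.exp (-(x - μ' j) / σ' j))⁻¹) :
    ∃ e : Fin s ≃ Fin t, ∀ i,
      π' (e i) = π i ∧ μ' (e i) = μ i ∧ σ' (e i) = σ i := by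
  let P : Fin s → {p : ℝ × ℝ | 0 < p.2} := fun i => ⟨(μ i, σ i), hσ i⟩
  let Q : Fin t → {p : ℝ × ℝ | 0 < p.2} := fun j => ⟨(μ' j, σ' j), hσ' j⟩
  have hsum : ∑ i, π i • (fun x => Real.sigmoid ((x - (P i).1.1) / (P i).1.2)) =
      ∑ j, π' j • (fun x => Real.sigmoid ((x - (Q j).1.1) / (Q j).1.2)) := by
    ext x
    simpa only [Finset.sum_apply, Pi.smul_apply, smul_eq_mul, Real.sigmoid, neg_div] using h x
  obtain ⟨e, he⟩ := linearIndepOn_logistic.exists_equiv_of_sum_smul_eq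
    (fun i j hij => hdist (congrArg Subtype.val hij))
    (fun i j hij => hdist' (congrArg Subtype.val hij))
    (fun i => (hπ i).1.ne') (fun j => (hπ' j).1.ne') hsum
  refine ⟨e, fun i => ⟨(he i).2, ?_⟩⟩
  simpa [P, Q] using (he i).1

theorem univariate_logistic_mixture_identifiable
    (s t : ℕ)
    (π μ σ : Fin s → ℝ) (π' μ' σ' : Fin t → ℝ)
    (hσ : ∀ i, 0 < σ i) (hσ' : ∀ j, 0 < σ' j)
    (hπ : ∀ i, π i ∈ Set.Ioo (0 : ℝ) 1) (hπ' : ∀ j, π' j ∈ Set.Ioo (0 : ℝ) 1)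
    (hsum : ∑ i, π i = 1) (hsum' : ∑ j, π' j = 1)
    (hdist : Function.Injective (fun i => (μ i, σ i)))
    (hdist' : Function.Injective (fun j => (μ' j, σ' j)))
    (h : ∀ x : ℝ,
      ∑ i, π i * (1 + Real.exp (-(x - μ i) / σ i))⁻¹ =
      ∑ j, π' j * (1 + Real.exp (-(x - μ' j) / σ' j))⁻¹) :
    ∃ e : Fin s ≃ Fin t, ∀ i,
      π' (e i) = π i ∧ μ' (e i) = μ i ∧ σ' (e i) = σ i :=
  univariate_logistic_mixture_identifiable_general s t π μ σ π' μ' σ' hσ hσ' hπ hπ' hdist hdist' h
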